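/- For the sum S of T+1 i.i.d. Poisson random variables each with mean C^γ (0<γ<1, T a fixed nonnegative integer), the limit as C→∞ of -(log P(S > C(T+1)))/(C log C) equals (1+T)(1-γ). -/

import Mathlib

/-!
Write `λ = (T+1)C^γ` for the rate and `n = C(T+1) + 1` for the first integer above the
threshold. The tail is squeezed between its first term `e^{-λ} λ^n / n!` and `λ^n / n!`, the
latter because `(n+j)! ≥ n! j!`. Bounding `log n!` between `n log n - n` (Stirling) and
`n log n` gives `-log P(S > C(T+1)) = n log (n/λ) + O(n + λ)`. Since `n/λ` grows like `C^{1-γ}`,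
the main term is `∼ (T+1)(1-γ) C log C`, while `n + λ = O(C) = o(C log C)` because `γ < 1`.
-/

open Filter Real

noncomputable def poisP (l : ℝ) (k : ℕ) : ℝ := Real.exp (-l) * l ^ k / (Nat.factorial k)

noncomputable def poissonTail (l : ℝ) (a : ℝ) : ℝ :=
  ∑' k : ℕ, if a < (k : ℝ) then poisP l k else 0

open Topology
open scoped Nat

lemma poisP_nonneg {l : ℝ} (hl : 0 ≤ l) (k : ℕ) : 0 ≤ poisP l k := by
  unfold poisP
  positivity

lemma poisP_pos {l : ℝ} (hl : 0 < l) (k : ℕ) : 0 < poisP l k := by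
  unfold poisP
  positivity

lemma hasSum_poisP (l : ℝ) : HasSum (poisP l) 1 := by
  have h := (NormedSpace.expSeries_div_hasSum_exp l).mul_left (exp (-l))
  rw [← exp_eq_exp_ℝ, ← exp_add, neg_add_cancel, exp_zero] at h
  rwa [show poisP l = fun k => exp (-l) * (l ^ k / k !) from funext fun k => mul_div_assoc _ _ _]

lemma poisP_add_le {l : ℝ} (hl : 0 ≤ l) (n j : ℕ) :
    poisP l (j + n) ≤ l ^ n / n ! * poisP l j := by
  have hfac : ((n ! * j ! : ℕ) : ℝ) ≤ (j + n)! := by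
    rw [add_comm j n]
    exact_mod_cast Nat.le_of_dvd (Nat.factorial_pos _)
      (Nat.factorial_mul_factorial_dvd_factorial_add n j)
  calc poisP l (j + n) ≤ exp (-l) * l ^ (j + n) / ((n ! * j ! : ℕ) : ℝ) := by
        unfold poisP
        gcongr
    _ = l ^ n / n ! * poisP l j := by
        unfold poisP
        push_cast
        ring

lemma poissonTail_natCast (l : ℝ) (m : ℕ) :
    poissonTail l m = ∑' j : ℕ, poisP l (j + (m + 1)) := by
  rw [poissonTail, ← (add_left_injective (m + 1)).tsum_eq]
  · exact tsum_congr fun j => if_pos (by exact_mod_cast (by omega : m < j + (m + 1)))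
  · intro k hk
    have hmk : m < k := by
      by_contra h
      exact hk (if_neg (by exact_mod_cast h))
    exact ⟨k - (m + 1), Nat.sub_add_cancel hmk⟩

lemma poisP_le_poissonTail {l : ℝ} (hl : 0 ≤ l) (m : ℕ) :
    poisP l (m + 1) ≤ poissonTail l m := by
  rw [poissonTail_natCast]
  simpa using ((summable_nat_add_iff (m + 1)).mpr (hasSum_poisP l).summable).le_tsum 0
    fun j _ => poisP_nonneg hl _

lemma poissonTail_le {l : ℝ} (hl : 0 ≤ l) (m : ℕ) :
    poissonTail l m ≤ l ^ (m + 1) / (m + 1)! := by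
  rw [poissonTail_natCast]
  calc ∑' j, poisP l (j + (m + 1)) ≤ ∑' j, l ^ (m + 1) / (m + 1)! * poisP l j :=
        ((summable_nat_add_iff (m + 1)).mpr (hasSum_poisP l).summable).tsum_le_tsum
          (poisP_add_le hl _) ((hasSum_poisP l).summable.mul_left _)
    _ = l ^ (m + 1) / (m + 1)! := by rw [tsum_mul_left, (hasSum_poisP l).tsum_eq, mul_one]

lemma log_poisP {l : ℝ} (hl : 0 < l) (n : ℕ) :
    log (poisP l n) = -l + n * log l - log n ! := by
  rw [poisP, log_div (by positivity) (by positivity), log_mul (exp_ne_zero _) (by positivity),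
    log_exp, log_pow]

lemma mul_log_div_sub_le_neg_log_poissonTail {l : ℝ} (hl : 0 < l) (m : ℕ) :
    ((m : ℝ) + 1) * log (((m : ℝ) + 1) / l) - ((m : ℝ) + 1) ≤ -log (poissonTail l m) := by
  have hstirling := Stirling.le_log_factorial_stirling m.succ_ne_zero
  have hupper := log_le_log ((poisP_pos hl _).trans_le (poisP_le_poissonTail hl.le m))
    (poissonTail_le hl.le m)
  rw [log_div (by positivity) (by positivity), log_pow] at hupper
  have hlog2π : 0 ≤ log (2 * π) := log_nonneg (by linarith [pi_gt_three])
  have hlogn : 0 ≤ log ((m : ℝ) + 1) := log_nonneg (by linarith [m.cast_nonneg (α := ℝ)])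
  rw [log_div (by positivity) hl.ne']
  push_cast at *
  linarith

lemma neg_log_poissonTail_le_mul_log_div_add {l : ℝ} (hl : 0 < l) (m : ℕ) :
    -log (poissonTail l m) ≤ ((m : ℝ) + 1) * log (((m : ℝ) + 1) / l) + l := by
  have hlower := log_le_log (poisP_pos hl _) (poisP_le_poissonTail hl.le m)
  have hfac : log (m + 1)! ≤ (m + 1 : ℕ) * log (m + 1 : ℕ) := by
    rw [← log_pow]
    exact log_le_log (by positivity) (by exact_mod_cast Nat.factorial_le_pow (m + 1))
  rw [log_poisP hl] at hlower
  rw [log_div (by positivity) hl.ne']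
  push_cast at *
  linarith

lemma tendsto_log_div_log_of_tendsto_div_rpow {α : Type*} {F : Filter α} {f g : α → ℝ}
    {p c : ℝ} (hg : Tendsto g F atTop) (hc : 0 < c)
    (hfg : Tendsto (fun x => f x / g x ^ p) F (𝓝 c)) :
    Tendsto (fun x => log (f x) / log (g x)) F (𝓝 p) := by
  have hlog : Tendsto (fun x => log (f x / g x ^ p) / log (g x) + p) F (𝓝 (0 + p)) :=
    (((continuousAt_log hc.ne').tendsto.comp hfg).div_atTop
      (tendsto_log_atTop.comp hg)).add_const p
  rw [zero_add] at hlog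
  refine hlog.congr' ?_
  filter_upwards [hg.eventually_gt_atTop 1, hfg.eventually_const_lt hc] with x hgx hfx
  have hg0 : 0 < g x := by linarith
  have hf0 : 0 < f x := by
    have := mul_pos hfx (rpow_pos_of_pos hg0 p)
    rwa [div_mul_cancel₀ _ (rpow_pos_of_pos hg0 p).ne'] at this
  rw [log_div hf0.ne' (rpow_pos_of_pos hg0 p).ne', log_rpow hg0, sub_div, mul_div_assoc,
    div_self (log_pos hgx).ne']
  ring

lemma tendsto_mul_add_one_div_natCast (A : ℝ) :
    Tendsto (fun C : ℕ => (C * A + 1) / C) atTop (𝓝 A) := by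
  have := (tendsto_one_div_atTop_nhds_zero_nat (𝕜 := ℝ)).const_add A
  rw [add_zero] at this
  refine this.congr' ?_
  filter_upwards [eventually_ne_atTop 0] with C hC0
  field_simp

lemma tendsto_mul_log_div_rpow {A γ : ℝ} (hA : 0 < A) :
    Tendsto (fun C : ℕ => (C * A + 1) * log ((C * A + 1) / (A * C ^ γ)) / (C * log C)) atTop
      (𝓝 (A * (1 - γ))) := by
  have hC : Tendsto (fun C : ℕ => (C : ℝ)) atTop atTop := tendsto_natCast_atTop_atTop
  have hlinear := tendsto_mul_add_one_div_natCast A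
  have hratio : Tendsto (fun C : ℕ => (C * A + 1) / (A * C ^ γ) / (C : ℝ) ^ (1 - γ)) atTop
      (𝓝 1) := by
    have := hlinear.div_const A
    rw [div_self hA.ne'] at this
    refine this.congr' ?_
    filter_upwards [eventually_ne_atTop 0] with C hC0
    have hCpos : (0 : ℝ) < C := by positivity
    rw [div_div, div_div, mul_assoc, ← rpow_add hCpos, add_sub_cancel, rpow_one]
    ring
  have := hlinear.mul (tendsto_log_div_log_of_tendsto_div_rpow hC one_pos hratio)
  refine this.congr fun C => ?_
  rw [mul_div_mul_comm]

lemma tendsto_log_natCast_atTop : Tendsto (fun C : ℕ => log (C : ℝ)) atTop atTop :=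
  tendsto_log_atTop.comp tendsto_natCast_atTop_atTop

lemma tendsto_mul_add_one_div_mul_log (A : ℝ) :
    Tendsto (fun C : ℕ => (C * A + 1) / (C * log C)) atTop (𝓝 0) := by
  simpa only [div_div] using (tendsto_mul_add_one_div_natCast A).div_atTop
    tendsto_log_natCast_atTop

lemma tendsto_mul_rpow_div_mul_log (A : ℝ) {γ : ℝ} (hγ : γ < 1) :
    Tendsto (fun C : ℕ => A * C ^ γ / (C * log C)) atTop (𝓝 0) := by
  have hdecay := ((tendsto_rpow_neg_atTop (sub_pos.mpr hγ)).comp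
    tendsto_natCast_atTop_atTop).const_mul A
  rw [mul_zero] at hdecay
  refine (hdecay.div_atTop tendsto_log_natCast_atTop).congr' ?_
  filter_upwards [eventually_ne_atTop 0] with C hC0
  rw [Function.comp_apply, neg_sub, rpow_sub (by positivity), rpow_one]
  ring

theorem poisson_polynomial_prediction_diversity_general (γ : ℝ) (hγ1 : γ < 1) (T : ℕ) :
    Tendsto (fun C : ℕ =>
        -(Real.log (poissonTail (((T : ℝ) + 1) * (C : ℝ) ^ γ) ((C : ℝ) * ((T : ℝ) + 1)))) /
          ((C : ℝ) * Real.log C))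
      atTop (nhds ((1 + (T : ℝ)) * (1 - γ))) := by
  set A : ℝ := T + 1
  have hmain := tendsto_mul_log_div_rpow (γ := γ) (by positivity : 0 < A)
  have hcast (C : ℕ) : (C : ℝ) * A = ((C * (T + 1) : ℕ) : ℝ) := by push_cast; ring
  rw [add_comm 1 (T : ℝ)]
  refine tendsto_of_tendsto_of_tendsto_of_le_of_le'
    (by simpa using hmain.sub (tendsto_mul_add_one_div_mul_log A))
    (by simpa using hmain.add (tendsto_mul_rpow_div_mul_log A hγ1)) ?_ ?_ <;>
  filter_upwards [eventually_gt_atTop 0] with C hC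
  · have h := mul_log_div_sub_le_neg_log_poissonTail (l := A * C ^ γ) (by positivity) (C * (T + 1))
    rw [← hcast] at h
    rw [← sub_div]
    gcongr
  · have h := neg_log_poissonTail_le_mul_log_div_add (l := A * C ^ γ) (by positivity) (C * (T + 1))
    rw [← hcast] at h
    rw [← add_div]
    gcongr

/-- For the sum `S` of `T+1` i.i.d. Poisson random variables each with mean `C^γ`
(equivalently, `S` Poisson with mean `(T+1)C^γ`), the limit as `C → ∞` of
`-(log P(S > C(T+1)))/(C log C)` equals `(1+T)(1-γ)`. -/
theorem poisson_polynomial_prediction_diversity (γ : ℝ) (hγ0 : 0 < γ) (hγ1 : γ < 1) (T : ℕ) :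
    Tendsto (fun C : ℕ =>
        -(Real.log (poissonTail (((T : ℝ) + 1) * (C : ℝ) ^ γ) ((C : ℝ) * ((T : ℝ) + 1)))) /
          ((C : ℝ) * Real.log C))
      atTop (nhds ((1 + (T : ℝ)) * (1 - γ))) :=
  poisson_polynomial_prediction_diversity_general γ hγ1 T
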